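/- Let γ ∈ ℝ, c ∈ ℝ^d, f : ℝ^d → ℝ, and g : ℝ^d → ℝ^d satisfy f(ω) ≤ f(x) + ⟨g(x), ω − x⟩ + (γ/2)‖ω − x‖² for all x, ω ∈ ℝ^d, and suppose the feasible set F := {ω : f(ω) ≤ 0} is bounded. Let (ω_k)_{k≥0} be a sequence with f(ω₀) ≤ 0 such that for every k, setting q_k(ω) = f(ω_k) + ⟨g(ω_k), ω − ω_k⟩ + (γ/2)‖ω − ω_k‖², the point ω_{k+1} satisfies q_k(ω_{k+1}) ≤ 0 and ⟨c,ω⟩ ≤ ⟨c,ω_{k+1}⟩ for every ω with q_k(ω) ≤ 0. Then the sequence (⟨c, ω_k⟩)_{k≥0} is monotonically nondecreasing and convergent. -/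
import Mathlib


open scoped RealInnerProductSpace

/-- **Convergence of the objective values.** For the support-function algorithm (where
`ω_{k+1}` is a global maximizer of `⟨c,·⟩` over the feasible set of the quadratic support
model `q_k` at `ω_k`, and the feasible set `{f ≤ 0}` is bounded), the sequence of objective
values `⟨c, ω_k⟩` is monotonically nondecreasing and convergent. -/
theorem stmt_5 {d : ℕ} (γ : ℝ) (c : EuclideanSpace ℝ (Fin d))
    (f : EuclideanSpace ℝ (Fin d) → ℝ)
    (g : EuclideanSpace ℝ (Fin d) → EuclideanSpace ℝ (Fin d))
    (hsupp : ∀ x ω, f ω ≤ f x + ⟪g x, ω - x⟫ + γ / 2 * ‖ω - x‖ ^ 2)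
    (hbdd : Bornology.IsBounded {ω : EuclideanSpace ℝ (Fin d) | f ω ≤ 0})
    (ω : ℕ → EuclideanSpace ℝ (Fin d)) (h0 : f (ω 0) ≤ 0)
    (hstep : ∀ k,
      (f (ω k) + ⟪g (ω k), ω (k + 1) - ω k⟫ + γ / 2 * ‖ω (k + 1) - ω k‖ ^ 2 ≤ 0) ∧
      ∀ x, f (ω k) + ⟪g (ω k), x - ω k⟫ + γ / 2 * ‖x - ω k‖ ^ 2 ≤ 0 →
        ⟪c, x⟫ ≤ ⟪c, ω (k + 1)⟫) :
    Monotone (fun k => ⟪c, ω k⟫) ∧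
      ∃ L : ℝ, Filter.Tendsto (fun k => ⟪c, ω k⟫) Filter.atTop (nhds L) := by
  -- every iterate is feasible
  have hfeas : ∀ k, f (ω k) ≤ 0 := by
    intro k
    induction k with
    | zero => exact h0
    | succ n ih => exact le_trans (hsupp (ω n) (ω (n + 1))) (hstep n).1
  -- monotonicity: ω k satisfies the model inequality at step k
  have hmono : Monotone (fun k => ⟪c, ω k⟫) := by
    apply monotone_nat_of_le_succ
    intro k
    apply (hstep k).2 (ω k)
    simp [hfeas k]
  -- boundedness of objective values
  obtain ⟨M, hM⟩ := hbdd.exists_norm_le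
  have hbdda : BddAbove (Set.range fun k => ⟪c, ω k⟫) := by
    refine ⟨‖c‖ * M, ?_⟩
    rintro x ⟨k, rfl⟩
    calc ⟪c, ω k⟫ ≤ ‖c‖ * ‖ω k‖ := real_inner_le_norm c (ω k)
    _ ≤ ‖c‖ * M := by
        exact mul_le_mul_of_nonneg_left (hM (ω k) (hfeas k)) (norm_nonneg c)
  exact ⟨hmono, ⟨_, tendsto_atTop_ciSup hmono hbdda⟩⟩
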